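/- Let λ ∈ ℝ be such that λ ≠ ‖ξ_m + K‖² for every m ∈ ℤ². Then the function m = (m₁, m₂) ↦ m₁·exp(i·ξ_m·x₀)/(‖ξ_m + K‖² − λ)² is absolutely summable over ℤ², and ∑_{m ∈ ℤ²} exp(i·ξ_m·x₀)·((ξ_m + K)·v₁)/(‖ξ_m + K‖² − λ)² = 2π·∑_{m ∈ ℤ²} m₁·exp(i·ξ_m·x₀)/(‖ξ_m + K‖² − λ)². -/

import Mathlib

open Real

noncomputable section

/-- ℝ² with the Euclidean norm. -/
abbrev E2 := EuclideanSpace ℝ (Fin 2)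

/-- Build a vector in ℝ². -/
def vec (x y : ℝ) : E2 := (WithLp.equiv 2 _).symm ![x, y]

/-- Dual basis vector k₁ = (4π/(a√3))(1/2, √3/2). -/
def k1 (a : ℝ) : E2 := (4 * π / (a * Real.sqrt 3)) • vec (1/2) (Real.sqrt 3 / 2)

/-- Dual basis vector k₂ = (4π/(a√3))(1/2, −√3/2). -/
def k2 (a : ℝ) : E2 := (4 * π / (a * Real.sqrt 3)) • vec (1/2) (-(Real.sqrt 3) / 2)

/-- Dual lattice vector ξ_m = m₁k₁ + m₂k₂. -/
def xiv (a : ℝ) (m : ℤ × ℤ) : E2 := (m.1 : ℝ) • k1 a + (m.2 : ℝ) • k2 a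

/-- The Dirac point K = (2/3)k₁ + (1/3)k₂. -/
def KD (a : ℝ) : E2 := (2/3 : ℝ) • k1 a + (1/3 : ℝ) • k2 a

/-- Lattice basis vector v₁ = a(√3/2, 1/2). -/
def v1 (a : ℝ) : E2 := a • vec (Real.sqrt 3 / 2) (1/2)

/-- Lattice basis vector v₂ = a(√3/2, −1/2). -/
def v2 (a : ℝ) : E2 := a • vec (Real.sqrt 3 / 2) (-(1/2))

/-- x₀ = (2/3)(v₁ + v₂). -/
def x0 (a : ℝ) : E2 := (2/3 : ℝ) • (v1 a + v2 a)

/-- Rotation of ℝ² by 2π/3, i.e. the matrix (1/2)[[−1, −√3], [√3, −1]]. -/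
def Rrot (v : E2) : E2 :=
  vec ((-v 0 - Real.sqrt 3 * v 1) / 2) ((Real.sqrt 3 * v 0 - v 1) / 2)

/-- T(m₁, m₂) = (−m₁ + m₂ − 1, −m₁ − 1). -/
def T (m : ℤ × ℤ) : ℤ × ℤ := (-m.1 + m.2 - 1, -m.1 - 1)

/-! ### Auxiliary material -/

/-- The quadratic form in m giving the norm of ξ_m + K, up to the factor c². -/
def Nf (m : ℤ × ℤ) : ℝ :=
  ((m.1:ℝ)+2/3)^2 + ((m.2:ℝ)+1/3)^2 - ((m.1:ℝ)+2/3)*((m.2:ℝ)+1/3)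

lemma Nf_T (m : ℤ × ℤ) : Nf (T m) = Nf m := by
  simp only [Nf, T]
  push_cast
  ring

/-- T as an equivalence. -/
def Tequiv : (ℤ × ℤ) ≃ (ℤ × ℤ) where
  toFun := T
  invFun n := (-n.2 - 1, n.1 - n.2)
  left_inv m := by simp [T]
  right_inv n := by simp [T]

lemma norm_vec_sq (x y : ℝ) : ‖vec x y‖ ^ 2 = x^2 + y^2 := by
  rw [EuclideanSpace.norm_eq, Real.sq_sqrt (by positivity)]
  simp [vec, Fin.sum_univ_two, WithLp.equiv_symm_apply, WithLp.ofLp_toLp]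

lemma comp_eq (a : ℝ) (m : ℤ × ℤ) :
    xiv a m + KD a = vec ((4*π/(a*Real.sqrt 3)) * (((m.1:ℝ)+2/3) + ((m.2:ℝ)+1/3)) / 2)
      ((4*π/(a*Real.sqrt 3)) * Real.sqrt 3 * (((m.1:ℝ)+2/3) - ((m.2:ℝ)+1/3)) / 2) := by
  ext i
  fin_cases i <;>
  · simp only [xiv, KD, k1, k2, vec, PiLp.add_apply, PiLp.smul_apply,
      WithLp.equiv_symm_apply, WithLp.ofLp_toLp, Fin.zero_eta, Fin.mk_one, Matrix.cons_val_zero,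
      Matrix.cons_val_one, Matrix.head_cons, smul_eq_mul]
    ring

lemma norm_sq_eq (a : ℝ) (m : ℤ × ℤ) :
    ‖xiv a m + KD a‖ ^ 2 = (4*π/(a*Real.sqrt 3))^2 * Nf m := by
  have hs : Real.sqrt 3 ^ 2 = 3 := Real.sq_sqrt (by norm_num)
  rw [comp_eq, norm_vec_sq, Nf]
  nlinarith [hs, sq_nonneg (4*π/(a*Real.sqrt 3))]

open RealInnerProductSpace in
lemma inner_x0 (a : ℝ) (ha : 0 < a) (m : ℤ × ℤ) :
    (⟪xiv a m, x0 a⟫ : ℝ) = 4*π/3*((m.1:ℝ)+(m.2:ℝ)) := by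
  have hs : Real.sqrt 3 ^ 2 = 3 := Real.sq_sqrt (by norm_num)
  simp only [xiv, x0, v1, v2, k1, k2, vec, PiLp.inner_apply, RCLike.inner_apply,
    PiLp.add_apply, PiLp.smul_apply, WithLp.equiv_symm_apply, WithLp.ofLp_toLp, Fin.sum_univ_two,
    Matrix.cons_val_zero, Matrix.cons_val_one, Matrix.head_cons, smul_eq_mul, star_trivial, conj_trivial]
  field_simp
  nlinarith [hs, Real.pi_pos]

open RealInnerProductSpace in
lemma inner_v1 (a : ℝ) (ha : 0 < a) (m : ℤ × ℤ) :
    (⟪xiv a m + KD a, v1 a⟫ : ℝ) = 2*π*(m.1:ℝ) + 4*π/3 := by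
  have hs : Real.sqrt 3 ^ 2 = 3 := Real.sq_sqrt (by norm_num)
  simp only [xiv, KD, v1, k1, k2, vec, PiLp.inner_apply, RCLike.inner_apply,
    PiLp.add_apply, PiLp.smul_apply, WithLp.equiv_symm_apply, WithLp.ofLp_toLp, Fin.sum_univ_two,
    Matrix.cons_val_zero, Matrix.cons_val_one, Matrix.head_cons, smul_eq_mul, star_trivial, conj_trivial]
  field_simp
  nlinarith [hs, Real.pi_pos]

lemma int_sq_le1 (k : ℤ) : (k:ℝ)^2 ≤ 9*((k:ℝ)+2/3)^2 := by
  rcases le_or_gt 0 k with h | h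
  · have : (0:ℝ) ≤ (k:ℝ) := by exact_mod_cast h
    nlinarith
  · have : (k:ℝ) ≤ -1 := by exact_mod_cast (by omega : k ≤ -1)
    nlinarith

lemma int_sq_le2 (k : ℤ) : (k:ℝ)^2 ≤ 9*((k:ℝ)+1/3)^2 := by
  rcases le_or_gt 0 k with h | h
  · have : (0:ℝ) ≤ (k:ℝ) := by exact_mod_cast h
    nlinarith
  · have : (k:ℝ) ≤ -1 := by exact_mod_cast (by omega : k ≤ -1)
    nlinarith

lemma Mfin (t : ℝ) : {m : ℤ × ℤ | ¬ t ≤ (max m.1.natAbs m.2.natAbs : ℕ)}.Finite := by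
  set n : ℤ := ⌈t⌉
  apply Set.Finite.subset (Set.finite_Icc ((-n, -n) : ℤ × ℤ) (n, n))
  intro m hm
  simp only [Set.mem_setOf_eq, not_le] at hm
  have h1 : |(m.1:ℝ)| ≤ ((max m.1.natAbs m.2.natAbs : ℕ) : ℝ) := by
    rw [← Int.cast_abs, ← Nat.cast_natAbs]; exact_mod_cast le_max_left _ _
  have h2 : |(m.2:ℝ)| ≤ ((max m.1.natAbs m.2.natAbs : ℕ) : ℝ) := by
    rw [← Int.cast_abs, ← Nat.cast_natAbs]; exact_mod_cast le_max_right _ _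
  have hn : ((max m.1.natAbs m.2.natAbs : ℕ) : ℝ) < (n:ℝ) := lt_of_lt_of_le hm (Int.le_ceil t)
  have j1 : |m.1| ≤ n := by
    have := (lt_of_le_of_lt h1 hn).le
    exact_mod_cast this
  have j2 : |m.2| ≤ n := by
    have := (lt_of_le_of_lt h2 hn).le
    exact_mod_cast this
  obtain ⟨l1, r1⟩ := abs_le.mp j1
  obtain ⟨l2, r2⟩ := abs_le.mp j2
  simp only [Set.mem_Icc, Prod.le_def]
  exact ⟨⟨l1, l2⟩, r1, r2⟩

lemma base_summable : Summable (fun m : ℤ × ℤ => ‖![m.1, m.2]‖ ^ (-(3:ℝ))) := by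
  have h := EisensteinSeries.summable_one_div_norm_rpow (k := 3) (by norm_num)
  have h2 := (Equiv.summable_iff (finTwoArrowEquiv ℤ).symm
    (f := fun (x : Fin 2 → ℤ) => ‖x‖ ^ (-(3:ℝ)))).mpr h
  refine h2.congr fun m => ?_
  simp [finTwoArrowEquiv]

set_option maxHeartbeats 1000000 in
lemma key_summable (c lam : ℝ) (hc : 0 < c) :
    Summable (fun m : ℤ × ℤ => (|(m.1:ℝ)| + 1) / (c^2 * Nf m - lam)^2) := by
  set t := max (6*(Real.sqrt |lam| + 1)/c) 1 with ht
  have hg : Summable (fun m : ℤ × ℤ => (2592/c^4) * ‖![m.1, m.2]‖ ^ (-(3:ℝ))) :=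
    base_summable.mul_left _
  apply Summable.of_norm_bounded_eventually hg
  have hev : ∀ᶠ m : ℤ × ℤ in Filter.cofinite,
      t ≤ ((max m.1.natAbs m.2.natAbs : ℕ) : ℝ) := Filter.eventually_cofinite.mpr (Mfin t)
  filter_upwards [hev] with m hm
  set M : ℝ := ((max m.1.natAbs m.2.natAbs : ℕ) : ℝ) with hMdef
  set u : ℝ := (m.1:ℝ) with hu
  set v : ℝ := (m.2:ℝ) with hv
  have hM1 : 1 ≤ M := le_trans (le_max_right _ 1) hm
  have hM0 : 0 < M := lt_of_lt_of_le one_pos hM1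
  have hMu : |u| ≤ M := by
    rw [← Int.cast_abs, ← Nat.cast_natAbs, hMdef]
    exact_mod_cast le_max_left _ _
  have hMv : |v| ≤ M := by
    rw [← Int.cast_abs, ← Nat.cast_natAbs, hMdef]
    exact_mod_cast le_max_right _ _
  have hM2 : M^2 ≤ u^2 + v^2 := by
    rcases max_choice m.1.natAbs m.2.natAbs with h | h
    · have : M = |u| := by rw [hMdef, h, Nat.cast_natAbs, Int.cast_abs]
      rw [this, sq_abs]; nlinarith [sq_nonneg v]
    · have : M = |v| := by rw [hMdef, h, Nat.cast_natAbs, Int.cast_abs]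
      rw [this, sq_abs]; nlinarith [sq_nonneg u]
  have hq1 : u^2 ≤ 9*(u+2/3)^2 := int_sq_le1 m.1
  have hq2 : v^2 ≤ 9*(v+1/3)^2 := int_sq_le2 m.2
  have hNf : Nf m = (u+2/3)^2 + (v+1/3)^2 - (u+2/3)*(v+1/3) := rfl
  set N : ℝ := (u+2/3)^2 + (v+1/3)^2 - (u+2/3)*(v+1/3) with hNdef
  rw [hNf]
  have hN : M^2/18 ≤ N := by nlinarith [sq_nonneg ((u+2/3)-(v+1/3))]
  have hlam2 : |lam| ≤ c^2*M^2/36 := by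
    have h1 : 6*(Real.sqrt |lam| + 1)/c ≤ M := le_trans (le_max_left _ _) hm
    have h2 : 6*(Real.sqrt |lam| + 1) ≤ c*M := by
      rw [div_le_iff₀ hc] at h1; linarith [h1]
    have h3 : Real.sqrt |lam| ^ 2 = |lam| := Real.sq_sqrt (abs_nonneg lam)
    nlinarith [Real.sqrt_nonneg |lam|, h2, mul_self_le_mul_self (by positivity) h2]
  set D : ℝ := c^2*N - lam with hDdef
  clear_value M u v N D
  have hD : c^2*M^2/36 ≤ D := by
    have e1 : c^2*M^2/18 ≤ c^2*N := by
      have := mul_le_mul_of_nonneg_left hN (sq_nonneg c)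
      linarith
    have e2 := le_abs_self lam
    have e3 : D = c^2*N - lam := hDdef
    linarith
  have hDpos : 0 < D :=
    lt_of_lt_of_le (div_pos (mul_pos (pow_pos hc 2) (pow_pos hM0 2)) (by norm_num)) hD
  have hnorm : ‖![m.1, m.2]‖ = M := by
    rw [EisensteinSeries.norm_eq_max_natAbs]
    simp [hMdef]
  rw [hnorm]
  have hrpow : M ^ (-(3:ℝ)) = 1/M^3 := by
    rw [Real.rpow_neg hM0.le, one_div, ← Real.rpow_natCast M 3]
    norm_num
  rw [hrpow, Real.norm_eq_abs, abs_of_nonneg (by positivity)]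
  have hrhs : 2592/c^4 * (1/M^3) = 2592 / (c^4 * M^3) := by
    field_simp
  rw [hrhs, div_le_div_iff₀ (pow_pos hDpos 2) (by positivity)]
  have hDsq : (c^2*M^2/36)^2 ≤ D^2 := pow_le_pow_left₀ (by positivity) hD 2
  nlinarith [mul_le_mul_of_nonneg_right (show |u| + 1 ≤ 2*M by linarith)
    (show (0:ℝ) ≤ c^4*M^3 by positivity), hDsq]

set_option maxHeartbeats 2000000 in
open RealInnerProductSpace in
/-- m ↦ m₁·exp(i ξ_m·x₀)/(‖ξ_m + K‖² − λ)² is absolutely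
summable over ℤ², and
∑_m exp(i ξ_m·x₀)((ξ_m + K)·v₁)/(‖ξ_m + K‖² − λ)²
  = 2π ∑_m m₁ exp(i ξ_m·x₀)/(‖ξ_m + K‖² − λ)². -/
theorem stmt_15 (a : ℝ) (ha : 0 < a) (lam : ℝ)
    (hlam : ∀ m : ℤ × ℤ, lam ≠ ‖xiv a m + KD a‖ ^ 2) :
    Summable (fun m : ℤ × ℤ =>
      ‖((m.1 : ℂ) * Complex.exp (Complex.I * (⟪xiv a m, x0 a⟫ : ℝ)) /
        ((‖xiv a m + KD a‖ ^ 2 - lam : ℝ) : ℂ) ^ 2)‖) ∧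
    ∑' m : ℤ × ℤ,
        Complex.exp (Complex.I * (⟪xiv a m, x0 a⟫ : ℝ)) *
          ((⟪xiv a m + KD a, v1 a⟫ : ℝ) : ℂ) /
          ((‖xiv a m + KD a‖ ^ 2 - lam : ℝ) : ℂ) ^ 2
      = 2 * (π : ℂ) * ∑' m : ℤ × ℤ,
          (m.1 : ℂ) * Complex.exp (Complex.I * (⟪xiv a m, x0 a⟫ : ℝ)) /
            ((‖xiv a m + KD a‖ ^ 2 - lam : ℝ) : ℂ) ^ 2 := by
  have hs3 : (0:ℝ) < Real.sqrt 3 := Real.sqrt_pos.mpr (by norm_num)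
  set c : ℝ := 4*π/(a*Real.sqrt 3) with hc_def
  have hc : 0 < c := by
    rw [hc_def]
    exact div_pos (by positivity) (by positivity)
  have hnorm : ∀ m : ℤ × ℤ, ‖xiv a m + KD a‖ ^ 2 = c^2 * Nf m := fun m => norm_sq_eq a m
  have hD0 : ∀ m : ℤ × ℤ, (c^2 * Nf m - lam) ≠ 0 := by
    intro m
    have := hlam m
    rw [hnorm m] at this
    exact sub_ne_zero.mpr (Ne.symm this)
  have hD2pos : ∀ m : ℤ × ℤ, (0:ℝ) < (c^2 * Nf m - lam)^2 := fun m =>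
    lt_of_le_of_ne (sq_nonneg _) (Ne.symm (pow_ne_zero 2 (hD0 m)))
  -- absolute value computation
  have habs : ∀ m : ℤ × ℤ,
      ‖((m.1 : ℂ) * Complex.exp (Complex.I * (⟪xiv a m, x0 a⟫ : ℝ)) /
        ((c^2 * Nf m - lam : ℝ) : ℂ) ^ 2)‖ = |(m.1:ℝ)| / (c^2 * Nf m - lam)^2 := by
    intro m
    rw [norm_div, norm_mul, norm_pow, Complex.norm_real, Real.norm_eq_abs, sq_abs]
    congr 1
    rw [Complex.norm_exp]
    simp
  -- Part 1
  have part1 : Summable (fun m : ℤ × ℤ =>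
      ‖((m.1 : ℂ) * Complex.exp (Complex.I * (⟪xiv a m, x0 a⟫ : ℝ)) /
        ((c^2 * Nf m - lam : ℝ) : ℂ) ^ 2)‖) := by
    apply Summable.of_nonneg_of_le (fun m => norm_nonneg _) _ (key_summable c lam hc)
    intro m
    rw [habs m]
    exact (div_le_div_iff_of_pos_right (hD2pos m)).mpr (by linarith [abs_nonneg ((m.1:ℝ))])
  -- rewrite the goal
  simp only [hnorm, inner_x0 a ha, inner_v1 a ha]
  refine ⟨part1.congr fun m => by rw [inner_x0 a ha], ?_⟩
  -- complex summand notation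
  have hA : Summable (fun m : ℤ × ℤ => (m.1 : ℂ) *
      Complex.exp (Complex.I * ((4*π/3*((m.1:ℝ)+(m.2:ℝ)) : ℝ) : ℂ)) /
      ((c^2 * Nf m - lam : ℝ) : ℂ) ^ 2) := by
    apply Summable.of_norm
    refine part1.congr fun m => ?_
    rw [inner_x0 a ha]
  have hnormF : ∀ m : ℤ × ℤ, ‖Complex.exp (Complex.I * ((4*π/3*((m.1:ℝ)+(m.2:ℝ)) : ℝ) : ℂ)) /
      ((c^2 * Nf m - lam : ℝ) : ℂ) ^ 2‖ = 1 / (c^2 * Nf m - lam)^2 := by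
    intro m
    rw [norm_div, norm_pow, Complex.norm_real, Real.norm_eq_abs, sq_abs, Complex.norm_exp]
    simp
  have hB : Summable (fun m : ℤ × ℤ =>
      Complex.exp (Complex.I * ((4*π/3*((m.1:ℝ)+(m.2:ℝ)) : ℝ) : ℂ)) /
      ((c^2 * Nf m - lam : ℝ) : ℂ) ^ 2) := by
    apply Summable.of_norm
    apply Summable.of_nonneg_of_le (fun m => norm_nonneg _) _ (key_summable c lam hc)
    intro m
    rw [hnormF m]
    exact (div_le_div_iff_of_pos_right (hD2pos m)).mpr (by linarith [abs_nonneg ((m.1:ℝ))])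
  -- the vanishing sum
  set ω : ℂ := Complex.exp (Complex.I * ((4*π/3 : ℝ) : ℂ)) with hω_def
  have hFT : ∀ m : ℤ × ℤ,
      Complex.exp (Complex.I * ((4*π/3*(((T m).1:ℝ)+((T m).2:ℝ)) : ℝ) : ℂ)) /
        ((c^2 * Nf (T m) - lam : ℝ) : ℂ) ^ 2
      = ω * (Complex.exp (Complex.I * ((4*π/3*((m.1:ℝ)+(m.2:ℝ)) : ℝ) : ℂ)) /
        ((c^2 * Nf m - lam : ℝ) : ℂ) ^ 2) := by
    intro m
    rw [Nf_T]
    have harg : Complex.I * ((4*π/3*(((T m).1:ℝ)+((T m).2:ℝ)) : ℝ) : ℂ)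
        = Complex.I * ((4*π/3*((m.1:ℝ)+(m.2:ℝ)) : ℝ) : ℂ)
          + ((-2*m.1-2 : ℤ) : ℂ) * (2*(π:ℂ)*Complex.I)
          + Complex.I * ((4*π/3 : ℝ) : ℂ) := by
      simp only [T]
      push_cast
      ring
    rw [harg, Complex.exp_add, Complex.exp_add, Complex.exp_int_mul_two_pi_mul_I]
    rw [hω_def]
    ring
  have hω1 : ω ≠ 1 := by
    rw [hω_def]
    intro h
    rw [Complex.exp_eq_one_iff] at h
    obtain ⟨n, hn⟩ := h
    have h2 : Complex.I * ((4*π/3 : ℝ) : ℂ) = Complex.I * ((n : ℂ) * (2*(π:ℂ))) := by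
      rw [hn]; ring
    have h3 : ((4*π/3 : ℝ) : ℂ) = (n : ℂ) * (2*(π:ℂ)) :=
      mul_left_cancel₀ Complex.I_ne_zero h2
    have h4 : (4*π/3 : ℝ) = (n : ℝ) * (2*π) := by exact_mod_cast h3
    have h5 : (4 : ℝ) * π = (6 * (n:ℝ)) * π := by linarith
    have h6 : (4 : ℝ) = 6 * (n:ℝ) := mul_right_cancel₀ Real.pi_ne_zero h5
    have : (4 : ℤ) = 6 * n := by exact_mod_cast h6
    omega
  have hF0 : ∑' m : ℤ × ℤ,
      Complex.exp (Complex.I * ((4*π/3*((m.1:ℝ)+(m.2:ℝ)) : ℝ) : ℂ)) /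
        ((c^2 * Nf m - lam : ℝ) : ℂ) ^ 2 = 0 := by
    set S : ℂ := ∑' m : ℤ × ℤ,
      Complex.exp (Complex.I * ((4*π/3*((m.1:ℝ)+(m.2:ℝ)) : ℝ) : ℂ)) /
        ((c^2 * Nf m - lam : ℝ) : ℂ) ^ 2 with hS_def
    have hSω : S = ω * S := by
      conv_lhs => rw [hS_def, ← Tequiv.tsum_eq]
      exact (tsum_congr fun m => hFT m).trans (by rw [tsum_mul_left, ← hS_def])
    have hfac : (1 - ω) * S = 0 := by linear_combination hSω
    rcases mul_eq_zero.mp hfac with h | h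
    · exact absurd (by linear_combination -h : ω = 1) hω1
    · exact h
  -- final computation
  have hsplit : ∀ m : ℤ × ℤ,
      Complex.exp (Complex.I * ((4*π/3*((m.1:ℝ)+(m.2:ℝ)) : ℝ) : ℂ)) *
        ((2*π*(m.1:ℝ) + 4*π/3 : ℝ) : ℂ) / ((c^2 * Nf m - lam : ℝ) : ℂ) ^ 2
      = 2*(π:ℂ) * ((m.1 : ℂ) * Complex.exp (Complex.I *
          ((4*π/3*((m.1:ℝ)+(m.2:ℝ)) : ℝ) : ℂ)) / ((c^2 * Nf m - lam : ℝ) : ℂ) ^ 2)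
        + (4*(π:ℂ)/3) * (Complex.exp (Complex.I *
          ((4*π/3*((m.1:ℝ)+(m.2:ℝ)) : ℝ) : ℂ)) / ((c^2 * Nf m - lam : ℝ) : ℂ) ^ 2) := by
    intro m
    push_cast
    ring
  rw [tsum_congr hsplit, Summable.tsum_add (hA.mul_left _) (hB.mul_left _),
    tsum_mul_left, tsum_mul_left, hF0]
  ring
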